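/- For any reduced pipe dream P ∈ Π(ω) and any j ∈ [n], pipe j of P has exactly ninv(ω,j) southeast elbows, exactly 1 + ninv(ω,j) northwest elbows, exactly j − 1 − ninv(ω,j) crossings at which it is the vertical pipe, and exactly ω⁻¹(j) − 1 − ninv(ω,j) crossings at which it is the horizontal pipe, where ninv(ω,j) = #{i ∈ [n] : i < j and ω⁻¹(i) < ω⁻¹(j)}. -/

import Mathlib

/-- A pipe dream of size `n` on the triangular shape, with boxes indexed by pairs
`(r, c)` of a row `r` and a column `c`, both `0`-indexed (rows increase southwards,
columns increase eastwards).  `cross r c = true` means that box `(r, c)` contains a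
crossing tile; all other boxes contain elbow tiles.  Crossings are only allowed in
the full boxes of the triangular shape, i.e. those with `r + c + 2 ≤ n` (the boxes
with `r + c + 1 = n` are the half-boxes on the antidiagonal, which are forced
elbows).  The `n` pipes enter horizontally on the left side in rows `0, …, n-1` and
exit vertically on the top side in columns `0, …, n-1`; pipe `k` is the pipe
entering at row `k`.  An elbow tile connects the west edge of its box to the north
edge (the pipe travelling through this elbow passes northwest of the tile) and the
south edge to the east edge (this pipe passes southeast of the tile); a crossing
tile connects west to east and south to north. -/
structure PipeDream (n : ℕ) where
  cross : ℕ → ℕ → Bool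
  inShape : ∀ r c : ℕ, cross r c = true → r + c + 2 ≤ n

namespace PipeDream

variable {n : ℕ}

/-- `(P.pipes r c).1` is the label of the pipe entering box `(r, c)` from the west,
and `(P.pipes r c).2` is the label of the pipe entering box `(r, c)` from the south
(junk value `0` if there is no box below box `(r, c)` in the triangular shape). -/
def pipes (P : PipeDream n) : ℕ → ℕ → ℕ × ℕ
  | r, c =>
    (if hc : c = 0 then r
      else if P.cross r (c - 1) then (pipes P r (c - 1)).1 else (pipes P r (c - 1)).2,
     if hr : r + c + 2 ≤ n then
        if P.cross (r + 1) c then (pipes P (r + 1) c).2 else (pipes P (r + 1) c).1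
      else 0)
  termination_by r c => (n - r) + c
  decreasing_by all_goals omega

/-- The pipe entering box `(r, c)` from the west (travelling eastwards). -/
def west (P : PipeDream n) (r c : ℕ) : ℕ := (pipes P r c).1

/-- The pipe entering box `(r, c)` from the south (travelling northwards). -/
def south (P : PipeDream n) (r c : ℕ) : ℕ := (pipes P r c).2

/-- The pipe exiting on the top side at column `c`. -/
def exitPipe (P : PipeDream n) (c : ℕ) : ℕ :=
  if P.cross 0 c then P.south 0 c else P.west 0 c

/-- `P` has exit permutation `ω`, i.e. the pipe exiting at column `c` is `ω c`;
equivalently, pipe `k` exits at column `ω⁻¹ k`. -/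
def HasExitPerm (P : PipeDream n) (ω : Equiv.Perm (Fin n)) : Prop :=
  ∀ c : Fin n, P.exitPipe c.val = (ω c).val

/-- `P` is reduced: any two of its pipes cross at most once. -/
def Reduced (P : PipeDream n) : Prop :=
  ∀ r c r' c' : ℕ, P.cross r c = true → P.cross r' c' = true → (r, c) ≠ (r', c') →
    ¬ ((P.west r c = P.west r' c' ∧ P.south r c = P.south r' c') ∨
        (P.west r c = P.south r' c' ∧ P.south r c = P.west r' c'))

/-- The arcs of the contact graph `P♯` of `P`: there is one arc for each elbow
contact of `P` (an elbow tile in a full box of the triangular shape), oriented from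
the pipe passing northwest of the contact (the one travelling west-to-north) to the
pipe passing southeast of it (the one travelling south-to-east). -/
def Arc (P : PipeDream n) (i j : ℕ) : Prop :=
  ∃ r c : ℕ, r + c + 2 ≤ n ∧ P.cross r c = false ∧ P.west r c = i ∧ P.south r c = j

/-- `P` is acyclic: its contact graph has no directed cycle. -/
def Acyclic (P : PipeDream n) : Prop := ∀ i : ℕ, ¬ Relation.TransGen P.Arc i i

/-- `i ⪯_P j` : there is a directed path (possibly empty) from `i` to `j` in the
contact graph of `P`. -/
def Path (P : PipeDream n) (i j : ℕ) : Prop := Relation.ReflTransGen P.Arc i j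

/-- `π` is a linear extension of `P` : `π⁻¹ i < π⁻¹ j` for every arc `i → j` of the
contact graph of `P`. -/
def LinExt (P : PipeDream n) (π : Equiv.Perm (Fin n)) : Prop :=
  ∀ i j : Fin n, P.Arc i.val j.val → π⁻¹ i < π⁻¹ j

/-- There is a contact (an elbow tile in a full box) between pipes `i` and `j`
at box `b`. -/
def ContactAt (P : PipeDream n) (i j : ℕ) (b : ℕ × ℕ) : Prop :=
  b.1 + b.2 + 2 ≤ n ∧ P.cross b.1 b.2 = false ∧
    ((P.west b.1 b.2 = i ∧ P.south b.1 b.2 = j) ∨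
      (P.west b.1 b.2 = j ∧ P.south b.1 b.2 = i))

/-- `P'` is obtained from `P` by the flip exchanging the contact at box `b` with the
crossing at box `b'` (a contact and a crossing between the same two pipes). -/
def IsFlip (P P' : PipeDream n) (b b' : ℕ × ℕ) : Prop :=
  b ≠ b' ∧
  P.cross b.1 b.2 = false ∧ P.cross b'.1 b'.2 = true ∧
  P'.cross b.1 b.2 = true ∧ P'.cross b'.1 b'.2 = false ∧
  (∀ r c : ℕ, (r, c) ≠ b → (r, c) ≠ b' → P.cross r c = P'.cross r c) ∧
  ((P.west b.1 b.2 = P.west b'.1 b'.2 ∧ P.south b.1 b.2 = P.south b'.1 b'.2) ∨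
    (P.west b.1 b.2 = P.south b'.1 b'.2 ∧ P.south b.1 b.2 = P.west b'.1 b'.2))

/-- There is an increasing flip from `P` to `P'`: a flip exchanging a contact at a
box `b` weakly southwest of the box `b'` of the corresponding crossing. -/
def IncFlip (P P' : PipeDream n) : Prop :=
  ∃ b b' : ℕ × ℕ, P.IsFlip P' b b' ∧ b'.1 ≤ b.1 ∧ b.2 ≤ b'.2

end PipeDream

/-- The weak order on permutations of `Fin n` : `π ≤ σ` if and only if
`Inv(π) ⊆ Inv(σ)`, where `Inv(π)` is the set of pairs `(i, j)` with `i < j` and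
`π⁻¹ i > π⁻¹ j`. -/
def WeakLE {n : ℕ} (π σ : Equiv.Perm (Fin n)) : Prop :=
  ∀ i j : Fin n, i < j → π⁻¹ j < π⁻¹ i → σ⁻¹ j < σ⁻¹ i

/-- The number `ninv ω j` of non-inversions of `j` in `ω` :
`#{i : i < j and ω⁻¹ i < ω⁻¹ j}`. -/
def ninv {n : ℕ} (ω : Equiv.Perm (Fin n)) (j : Fin n) : ℕ :=
  (Finset.univ.filter (fun i : Fin n => i < j ∧ ω⁻¹ i < ω⁻¹ j)).card

/-!
Follow pipe `j` box by box. Northwest elbows and vertical crossings move it one row up,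
southeast elbows and horizontal crossings one column right, and the elbows alternate
between the two kinds, turning the pipe from eastwards (at its entry) to northwards (at its
exit). Hence `#NW + #V = j + 1`, `#SE + #H = ω⁻¹ j` and `#NW = #SE + 1`, and it remains to
show that the vertical crossings of pipe `j` are with the pipes `i < j` exiting to the right
of `j`, exactly one each.

Every step moves a pipe to the next diagonal `col - row = const`, so two pipes `i < j`,
with clocks shifted by `j - i`, visit the same diagonals at the same times. Pipe `i` starts
above pipe `j`, they swap sides exactly when they cross, and just before the first of them
leaves the grid the leaving one is above the other: so they cross an odd number of times iff
`ω⁻¹ j < ω⁻¹ i`. In a reduced pipe dream they cross at most once, and at that crossing `i` is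
still above `j`, i.e. `i` is the horizontal pipe.
-/

theorem Nat.even_add_ite_iff {m : ℕ} {p : Prop} [Decidable p] :
    Even (m + if p then 1 else 0) ↔ (Even m ↔ ¬ p) := by
  split_ifs with h <;> simp [h, Nat.even_add_one]

namespace PipeDream

variable {n : ℕ}

section Trajectories

variable (P : PipeDream n)

theorem west_zero (r : ℕ) : P.west r 0 = r := by
  rw [west, pipes]; simp

theorem west_succ (r c : ℕ) :
    P.west r (c + 1) = if P.cross r c then P.west r c else P.south r c := by
  rw [west, pipes]; simp [west, south]

theorem south_eq (r c : ℕ) :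
    P.south r c = if r + c + 2 ≤ n then
      (if P.cross (r + 1) c then P.south (r + 1) c else P.west (r + 1) c) else 0 := by
  rw [south, pipes]; simp [west, south]

/-- The west (`fromWest = true`) or the south edge of box `(row, col)`. -/
structure Edge where
  row : ℕ
  col : ℕ
  fromWest : Bool

/-- West edges exist in all boxes of the shape, south edges only in the full boxes. -/
def Edge.InShape (n : ℕ) (a : Edge) : Prop :=
  a.row + a.col + (if a.fromWest then 1 else 2) ≤ n

def label (a : Edge) : ℕ := if a.fromWest then P.west a.row a.col else P.south a.row a.col

/-- A pipe entering a box through `a` leaves it eastwards when `cross = fromWest` (a crossing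
entered from the west, or an elbow entered from the south), and northwards otherwise,
leaving the grid from row `0`. -/
def step (a : Edge) : Option Edge :=
  if P.cross a.row a.col = a.fromWest then some ⟨a.row, a.col + 1, true⟩
  else if a.row = 0 then none
  else some ⟨a.row - 1, a.col, false⟩

/-- The edge through which pipe `k` enters a box at time `t`; `none` once it has left. -/
def traj (k : ℕ) : ℕ → Option Edge
  | 0 => some ⟨k, 0, true⟩
  | t + 1 => (traj k t).bind P.step

def Exits (k e : ℕ) : Prop :=
  ∃ w, P.traj k (k + e) = some ⟨0, e, w⟩ ∧ P.step ⟨0, e, w⟩ = none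

variable {P}

theorem Edge.InShape.row_add_col_lt {a : Edge} (ha : a.InShape n) : a.row + a.col < n := by
  unfold Edge.InShape at ha; split_ifs at ha <;> omega

theorem Edge.inShape_of_cross {r c : ℕ} (w : Bool) (hx : P.cross r c = true) :
    Edge.InShape n ⟨r, c, w⟩ := by
  have := P.inShape r c hx
  simp only [Edge.InShape]; split_ifs <;> omega

theorem traj_zero (k : ℕ) : P.traj k 0 = some ⟨k, 0, true⟩ := rfl

theorem traj_succ_eq_some {k t : ℕ} {b : Edge} :
    P.traj k (t + 1) = some b ↔ ∃ a, P.traj k t = some a ∧ P.step a = some b :=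
  Option.bind_eq_some_iff

theorem step_eq_none_iff {a : Edge} :
    P.step a = none ↔ a.row = 0 ∧ P.cross a.row a.col ≠ a.fromWest := by
  simp only [step]
  split_ifs <;> simp_all

theorem inShape_and_label_of_step {a b : Edge} (ha : a.InShape n) (hab : P.step a = some b) :
    b.InShape n ∧ P.label b = P.label a := by
  obtain ⟨r, c, w⟩ := a
  have hsh : r + c + (if w then 1 else 2) ≤ n := ha
  simp only [step] at hab
  split_ifs at hab with hx hr <;> cases hab
  · have : r + c + 2 ≤ n := by cases w <;> simp_all [P.inShape r c]
    exact ⟨by simp only [Edge.InShape, if_true]; omega, by simp [label, west_succ, hx]⟩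
  · have hsh' : r - 1 + c + 2 ≤ n := by split_ifs at hsh <;> omega
    refine ⟨by simpa [Edge.InShape] using hsh', ?_⟩
    rw [label, if_neg Bool.false_ne_true, south_eq, if_pos hsh', Nat.sub_add_cancel
      (Nat.pos_of_ne_zero hr), label]
    cases w <;> simp_all

theorem col_add_eq_of_traj {k t : ℕ} {a : Edge} (h : P.traj k t = some a) :
    a.col + k = t + a.row := by
  induction t generalizing a with
  | zero => cases h; simp
  | succ t ih =>
    obtain ⟨a', ha', hstep⟩ := traj_succ_eq_some.mp h
    have := ih ha'
    simp only [step] at hstep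
    split_ifs at hstep <;> cases hstep <;> simp <;> omega

theorem inShape_and_label_of_traj {k t : ℕ} (hk : k < n) {a : Edge}
    (h : P.traj k t = some a) : a.InShape n ∧ P.label a = k := by
  induction t generalizing a with
  | zero => cases h; exact ⟨by simp [Edge.InShape]; omega, by simp [label, west_zero]⟩
  | succ t ih =>
    obtain ⟨a', ha', hstep⟩ := traj_succ_eq_some.mp h
    obtain ⟨hsh, hlab⟩ := ih ha'
    obtain ⟨hsh', hlab'⟩ := inShape_and_label_of_step hsh hstep
    exact ⟨hsh', hlab'.trans hlab⟩

/-- Walk back through the box west of a west edge, or south of a south edge. -/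
theorem label_lt_and_exists_traj {a : Edge} (ha : a.InShape n) :
    P.label a < n ∧ ∃ t, P.traj (P.label a) t = some a := by
  induction hm : n - a.row + a.col using Nat.strong_induction_on generalizing a with
  | _ m ih =>
    have back : ∀ p : Edge, p.InShape n → P.step p = some a → n - p.row + p.col < m →
        P.label a < n ∧ ∃ t, P.traj (P.label a) t = some a := by
      intro p hp hstep hpm
      obtain ⟨hlt, t, ht⟩ := ih _ hpm hp rfl
      rw [(inShape_and_label_of_step hp hstep).2]
      exact ⟨hlt, t + 1, traj_succ_eq_some.mpr ⟨p, ht, hstep⟩⟩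
    obtain ⟨r, c, w⟩ := a
    simp only [Edge.InShape] at ha hm
    cases w with
    | false =>
      simp only [Bool.false_eq_true, if_false] at ha
      refine back ⟨r + 1, c, !P.cross (r + 1) c⟩ ?_ (by simp [step]) (by simp; omega)
      cases h : P.cross (r + 1) c
      · simp [Edge.InShape]; omega
      · simpa using Edge.inShape_of_cross false h
    | true =>
      simp only [if_true] at ha
      cases c with
      | zero => exact ⟨by simp [label, west_zero]; omega, 0, by simp [label, west_zero, traj]⟩
      | succ c =>
        refine back ⟨r, c, P.cross r c⟩ ?_ (by simp [step]) (by simp; omega)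
        simp only [Edge.InShape]; split_ifs <;> omega

theorem exists_traj_iff {k : ℕ} (hk : k < n) {a : Edge} :
    (∃ t, P.traj k t = some a) ↔ a.InShape n ∧ P.label a = k := by
  refine ⟨fun ⟨t, ht⟩ => inShape_and_label_of_traj hk ht, ?_⟩
  rintro ⟨ha, rfl⟩
  exact (label_lt_and_exists_traj ha).2

theorem traj_eq_none_of_le {k t t' : ℕ} (h : P.traj k t = none) (htt' : t ≤ t') :
    P.traj k t' = none := by
  induction htt' with
  | refl => exact h
  | step _ ih => simp [traj, ih]

theorem Exits.exists_traj {k e t : ℕ} (he : P.Exits k e) (ht : t ≤ k + e) :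
    ∃ a, P.traj k t = some a := by
  obtain ⟨w, hT, -⟩ := he
  by_contra! h
  simp [traj_eq_none_of_le (Option.eq_none_iff_forall_ne_some.mpr h) ht] at hT

theorem Exits.le_of_traj {k e t : ℕ} {a : Edge} (he : P.Exits k e)
    (h : P.traj k t = some a) : t ≤ k + e := by
  obtain ⟨w, hT, hstep⟩ := he
  by_contra! ht
  have hnone : P.traj k (k + e + 1) = none := by simp [traj, hT, hstep]
  simp [traj_eq_none_of_le hnone ht] at h

theorem exists_exits {k : ℕ} (hk : k < n) : ∃ e, P.Exits k e ∧ P.exitPipe e = k := by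
  have hend : P.traj k (n + k) = none := by
    by_contra! h
    obtain ⟨a, ha⟩ := Option.ne_none_iff_exists'.mp h
    have := (inShape_and_label_of_traj hk ha).1.row_add_col_lt
    have := col_add_eq_of_traj ha
    omega
  have hlast : ∀ t, P.traj k t = none → ∃ s a, P.traj k s = some a ∧ P.step a = none := by
    intro t
    induction t with
    | zero => simp [traj]
    | succ t ih =>
      intro ht
      cases h : P.traj k t with
      | none => exact ih h
      | some a => exact ⟨t, a, h, by simpa [traj, h] using ht⟩
  obtain ⟨s, ⟨r, c, w⟩, hs, hstep⟩ := hlast _ hend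
  obtain ⟨rfl, hx⟩ := step_eq_none_iff.mp hstep
  obtain rfl : s = k + c := by have := col_add_eq_of_traj hs; simp only at this; omega
  refine ⟨c, ⟨w, hs, hstep⟩, ?_⟩
  have hlab := (inShape_and_label_of_traj hk hs).2
  cases w <;> simp_all [exitPipe, label]

theorem exits_of_hasExitPerm {ω : Equiv.Perm (Fin n)} (hexit : P.HasExitPerm ω) (k : Fin n) :
    P.Exits k (ω⁻¹ k) := by
  obtain ⟨e, he, hpipe⟩ := exists_exits k.isLt
  have hen : e < n := by
    obtain ⟨w, hT, -⟩ := he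
    have := (inShape_and_label_of_traj k.isLt hT).1.row_add_col_lt
    dsimp only at this
    omega
  have hω : ω ⟨e, hen⟩ = k := Fin.ext ((hexit ⟨e, hen⟩).symm.trans hpipe)
  rwa [show ω⁻¹ k = ⟨e, hen⟩ by rw [← hω, Equiv.Perm.inv_def, Equiv.symm_apply_apply]]

end Trajectories

section TileCounts

variable {P : PipeDream n}

variable (P) in
def kindAt (k t : ℕ) : Option (Bool × Bool) :=
  (P.traj k t).map fun a => (a.fromWest, P.cross a.row a.col)

variable (P) in
/-- `(w, x) = (true, false)`: northwest elbows, `(false, false)`: southeast elbows,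
`(false, true)`: vertical crossings, `(true, true)`: horizontal crossings. -/
def tileCount (k : ℕ) (w x : Bool) (t : ℕ) : ℕ :=
  Nat.count (fun u => P.kindAt k u = some (w, x)) t

theorem tileCount_of_traj {k t : ℕ} {a : Edge} (h : P.traj k t = some a) :
    a.row + P.tileCount k true false t + P.tileCount k false true t = k ∧
    a.col = P.tileCount k false false t + P.tileCount k true true t ∧
    P.tileCount k true false t + (if a.fromWest then 1 else 0) =
      P.tileCount k false false t + 1 := by
  induction t generalizing a with
  | zero => cases h; simp [tileCount]
  | succ t ih =>
    obtain ⟨⟨r, c, w⟩, ha, hstep⟩ := traj_succ_eq_some.mp h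
    have hkind : P.kindAt k t = some (w, P.cross r c) := by simp [kindAt, ha]
    simp only [tileCount, Nat.count_succ] at ih ⊢
    obtain ⟨h1, h2, h3⟩ := ih ha
    simp only [step] at hstep
    split_ifs at hstep <;> cases hstep <;> cases w <;> simp_all <;> omega

theorem tileCount_of_exits {k e : ℕ} (he : P.Exits k e) :
    P.tileCount k true false (k + e + 1) + P.tileCount k false true (k + e + 1) = k + 1 ∧
    P.tileCount k false false (k + e + 1) + P.tileCount k true true (k + e + 1) = e ∧
    P.tileCount k true false (k + e + 1) = P.tileCount k false false (k + e + 1) + 1 := by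
  obtain ⟨w, hT, hstep⟩ := he
  have hkind : P.kindAt k (k + e) = some (w, !w) := by
    have := (step_eq_none_iff.mp hstep).2
    cases w <;> simp_all [kindAt]
  obtain ⟨h1, h2, h3⟩ := tileCount_of_traj hT
  simp only [tileCount, Nat.count_succ] at h1 h2 h3 ⊢
  cases w <;> simp [hkind] at h1 h2 h3 ⊢ <;> omega

/-- Pipe `k` can only be in box `(r, c)` at the time `c + k - r` fixed by its diagonal. -/
theorem ncard_eq_tileCount {k e : ℕ} (hk : k < n) (he : P.Exits k e) (w x : Bool) :
    {b : ℕ × ℕ | Edge.InShape n ⟨b.1, b.2, w⟩ ∧ P.cross b.1 b.2 = x ∧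
      P.label ⟨b.1, b.2, w⟩ = k}.ncard = P.tileCount k w x (k + e + 1) := by
  have time : ∀ {b : ℕ × ℕ}, Edge.InShape n ⟨b.1, b.2, w⟩ → P.label ⟨b.1, b.2, w⟩ = k →
      P.traj k (b.2 + k - b.1) = some ⟨b.1, b.2, w⟩ := by
    intro b hsh hlab
    obtain ⟨t, ht⟩ := (exists_traj_iff hk).mpr ⟨hsh, hlab⟩
    have := col_add_eq_of_traj ht
    simp only at this
    rwa [show b.2 + k - b.1 = t by omega]
  rw [tileCount, Nat.count_eq_card_filter_range, ← Set.ncard_coe_finset]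
  refine Set.ncard_congr (fun b _ => b.2 + k - b.1) ?_ ?_ ?_
  · rintro b ⟨hsh, hx, hlab⟩
    have ht := time hsh hlab
    have := he.le_of_traj ht
    rw [Finset.mem_coe, Finset.mem_filter, Finset.mem_range, kindAt, ht]
    exact ⟨by omega, by simp [hx]⟩
  · rintro b b' ⟨hsh, -, hlab⟩ ⟨hsh', -, hlab'⟩ (htt : _ = _)
    have h := time hsh hlab
    rw [htt, time hsh' hlab'] at h
    simp only [Option.some.injEq, Edge.mk.injEq] at h
    exact Prod.ext h.1.symm h.2.1.symm
  · intro u hu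
    simp only [Finset.coe_filter, Finset.mem_range, Set.mem_ofPred_eq, kindAt,
      Option.map_eq_some_iff, Prod.mk.injEq] at hu
    obtain ⟨-, ⟨r, c, w'⟩, hu, rfl, rfl⟩ := hu
    obtain ⟨hsh, hlab⟩ := inShape_and_label_of_traj hk hu
    have := col_add_eq_of_traj hu
    exact ⟨(r, c), ⟨hsh, rfl, hlab⟩, by simp only at this ⊢; omega⟩

theorem setOf_le_and_cross_eq_true {m : ℕ} (hm : m ≤ 2) (p : ℕ × ℕ → Prop) :
    {b : ℕ × ℕ | b.1 + b.2 + m ≤ n ∧ P.cross b.1 b.2 = true ∧ p b} =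
      {b | P.cross b.1 b.2 = true ∧ p b} := by
  ext b
  simp only [Set.mem_ofPred_eq, and_iff_right_iff_imp, and_imp]
  intro hx _
  have := P.inShape _ _ hx
  omega

end TileCounts

section Heights

variable {P : PipeDream n}

/-- Position of an edge along its diagonal `col - row = const`, increasing southeastwards;
the west edge of a box comes just before its south edge. -/
def Edge.height (a : Edge) : ℤ := 2 * a.row + if a.fromWest then 0 else 1

variable (P) in
/-- The height of the edge through which a pipe entering through `a` leaves the box;
leaving the grid through the top gives `-1`. -/
def nextHeight (a : Edge) : ℤ :=
  if P.cross a.row a.col = a.fromWest then 2 * a.row else 2 * a.row - 1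

variable (P) in
def SameCrossing (a b : Edge) : Prop :=
  a.row = b.row ∧ a.col = b.col ∧ P.cross a.row a.col = true

theorem height_of_step {a b : Edge} (h : P.step a = some b) : b.height = P.nextHeight a := by
  obtain ⟨r, c, w⟩ := a
  simp only [step] at h
  split_ifs at h with hx <;> cases h
  · simp [Edge.height, nextHeight, hx]
  · simp only [Edge.height, nextHeight, if_neg hx, Bool.false_eq_true, if_false]; omega

theorem nextHeight_of_step_eq_none {a : Edge} (h : P.step a = none) : P.nextHeight a = -1 := by
  obtain ⟨hr, hx⟩ := step_eq_none_iff.mp h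
  rw [nextHeight, if_neg hx, hr]; rfl

theorem neg_one_le_nextHeight (a : Edge) : -1 ≤ P.nextHeight a := by
  unfold nextHeight; split_ifs <;> omega

theorem nextHeight_lt_iff {a b : Edge} (hdiag : a.col + b.row = b.col + a.row) (hne : a ≠ b) :
    P.nextHeight a < P.nextHeight b ↔ (a.height < b.height ↔ ¬ P.SameCrossing a b) := by
  obtain ⟨r, c, w⟩ := a
  obtain ⟨r', c', w'⟩ := b
  simp only [ne_eq, Edge.mk.injEq] at hne hdiag
  simp only [nextHeight, Edge.height, SameCrossing]
  rcases Nat.lt_trichotomy r r' with hr | rfl | hr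
  · split_ifs <;> simp_all <;> omega
  · obtain rfl : c = c' := by omega
    cases w <;> cases w' <;> cases hx : P.cross r c <;> simp_all
  · split_ifs <;> simp_all <;> omega

theorem ne_of_traj {k k' t t' : ℕ} {a b : Edge} (hk : k < n) (hk' : k' < n) (hkk' : k ≠ k')
    (ha : P.traj k t = some a) (hb : P.traj k' t' = some b) : a ≠ b := by
  rintro rfl
  exact hkk' ((inShape_and_label_of_traj hk ha).2.symm.trans (inShape_and_label_of_traj hk' hb).2)

theorem Exits.nextHeight_neg_iff {k e t : ℕ} {a : Edge} (he : P.Exits k e)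
    (h : P.traj k t = some a) : P.nextHeight a < 0 ↔ t = k + e := by
  by_cases ht : t = k + e
  · obtain ⟨w, hT, hstep⟩ := he
    subst ht
    obtain rfl : a = ⟨0, e, w⟩ := Option.some.inj (h.symm.trans hT)
    simp [nextHeight_of_step_eq_none hstep]
  · obtain ⟨a', ha'⟩ := he.exists_traj (show t + 1 ≤ k + e by have := he.le_of_traj h; omega)
    obtain ⟨a₀, ha₀, hstep⟩ := traj_succ_eq_some.mp ha'
    obtain rfl : a₀ = a := Option.some.inj (ha₀.symm.trans h)
    rw [← height_of_step hstep]
    simp only [Edge.height, ht, iff_false, not_lt]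
    positivity

end Heights

section PairsOfPipes

open Classical

variable {P : PipeDream n} {i d : ℕ}

variable (P) in
/-- The clock of pipe `i + d` is shifted by `d` so that both pipes walk along the same
diagonals. -/
def CrossAt (i d s : ℕ) : Prop :=
  ∃ a b, P.traj i s = some a ∧ P.traj (i + d) (s + d) = some b ∧ P.SameCrossing a b

theorem crossAt_iff {s : ℕ} {a b : Edge} (ha : P.traj i s = some a)
    (hb : P.traj (i + d) (s + d) = some b) : P.CrossAt i d s ↔ P.SameCrossing a b := by
  simp [CrossAt, ha, hb]

theorem CrossAt.le {ei ej s : ℕ} (hi : P.Exits i ei) (hj : P.Exits (i + d) ej)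
    (h : P.CrossAt i d s) : s ≤ i + min ei ej := by
  obtain ⟨a, b, ha, hb, -⟩ := h
  have := hi.le_of_traj ha
  have := hj.le_of_traj hb
  omega

/-- Pipe `i` starts above pipe `i + d`, and the two swap sides exactly at their common
crossings. -/
theorem height_lt_iff_even_count (hd : 0 < d) (hn : i + d < n) {s : ℕ} {a b : Edge}
    (ha : P.traj i s = some a) (hb : P.traj (i + d) (s + d) = some b) :
    a.height < b.height ↔ Even (Nat.count (P.CrossAt i d) s) := by
  induction s generalizing a b with
  | zero =>
    cases ha
    have hdiag := col_add_eq_of_traj hb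
    have hne := ne_of_traj (by omega) hn (by omega) (P.traj_zero i) hb
    obtain ⟨r, c, w⟩ := b
    simp only [ne_eq, Edge.mk.injEq, not_and] at hne hdiag
    cases w
    · simp [Edge.height]; omega
    · have : i ≠ r := fun h => hne h (by omega) rfl
      simp [Edge.height]; omega
  | succ s ih =>
    rw [show s + 1 + d = s + d + 1 by omega] at hb
    obtain ⟨a', ha', hsa⟩ := traj_succ_eq_some.mp ha
    obtain ⟨b', hb', hsb⟩ := traj_succ_eq_some.mp hb
    have := col_add_eq_of_traj ha'
    have := col_add_eq_of_traj hb'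
    rw [height_of_step hsa, height_of_step hsb, Nat.count_succ, Nat.even_add_ite_iff,
      nextHeight_lt_iff (by omega) (ne_of_traj (by omega) hn (by omega) ha' hb'),
      ih ha' hb', crossAt_iff ha' hb']

/-- Just before the first of the two pipes leaves the grid, the leaving one is the upper one. -/
theorem even_count_crossAt_iff (hd : 0 < d) (hn : i + d < n) {ei ej : ℕ}
    (hi : P.Exits i ei) (hj : P.Exits (i + d) ej) (hne : ei ≠ ej) :
    Even (Nat.count (P.CrossAt i d) (i + min ei ej + 1)) ↔ ei < ej := by
  obtain ⟨a, ha⟩ := hi.exists_traj (t := i + min ei ej) (by omega)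
  obtain ⟨b, hb⟩ := hj.exists_traj (t := i + min ei ej + d) (by omega)
  have := col_add_eq_of_traj ha
  have := col_add_eq_of_traj hb
  rw [Nat.count_succ, Nat.even_add_ite_iff, ← height_lt_iff_even_count hd hn ha hb,
    crossAt_iff ha hb, ← nextHeight_lt_iff (by omega) (ne_of_traj (by omega) hn (by omega) ha hb)]
  have hia := hi.nextHeight_neg_iff ha
  have hjb := hj.nextHeight_neg_iff hb
  have := neg_one_le_nextHeight (P := P) a
  have := neg_one_le_nextHeight (P := P) b
  rcases lt_or_gt_of_ne hne with h | h
  · have : P.nextHeight a < 0 := hia.mpr (by omega)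
    have : ¬ P.nextHeight b < 0 := fun hb' => by have := hjb.mp hb'; omega
    simp only [h, iff_true]
    omega
  · have : ¬ P.nextHeight a < 0 := fun ha' => by have := hia.mp ha'; omega
    have : P.nextHeight b < 0 := hjb.mpr (by omega)
    simp only [not_lt.mpr h.le, iff_false]
    omega

theorem fromWest_ne_of_sameCrossing (hd : 0 < d) (hn : i + d < n) {s : ℕ} {a b : Edge}
    (ha : P.traj i s = some a) (hb : P.traj (i + d) (s + d) = some b)
    (hab : P.SameCrossing a b) : b.fromWest = !a.fromWest := by
  have hne := ne_of_traj (by omega) hn (by omega) ha hb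
  obtain ⟨r, c, w⟩ := a
  obtain ⟨r', c', w'⟩ := b
  obtain ⟨rfl, rfl, -⟩ := hab
  cases w <;> cases w' <;> simp_all

theorem west_south_of_sameCrossing (hd : 0 < d) (hn : i + d < n) {s : ℕ} {a b : Edge}
    (ha : P.traj i s = some a) (hb : P.traj (i + d) (s + d) = some b)
    (hab : P.SameCrossing a b) :
    (P.west a.row a.col = i ∧ P.south a.row a.col = i + d) ∨
      (P.west a.row a.col = i + d ∧ P.south a.row a.col = i) := by
  have hw := fromWest_ne_of_sameCrossing hd hn ha hb hab
  have hla := (inShape_and_label_of_traj (by omega) ha).2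
  have hlb := (inShape_and_label_of_traj hn hb).2
  obtain ⟨r, c, w⟩ := a
  obtain ⟨r', c', w'⟩ := b
  obtain ⟨rfl, rfl, -⟩ := hab
  simp only at hw
  subst hw
  cases w <;> simp_all [label]

theorem crossAt_unique (hred : P.Reduced) (hd : 0 < d) (hn : i + d < n) {s s' : ℕ}
    (h : P.CrossAt i d s) (h' : P.CrossAt i d s') : s = s' := by
  obtain ⟨a, b, ha, hb, hab⟩ := h
  obtain ⟨a', b', ha', hb', hab'⟩ := h'
  have := col_add_eq_of_traj ha
  have := col_add_eq_of_traj ha'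
  by_contra hss
  refine hred a.row a.col a'.row a'.col hab.2.2 hab'.2.2 (by simp; omega) ?_
  rcases west_south_of_sameCrossing hd hn ha hb hab with h | h <;>
    rcases west_south_of_sameCrossing hd hn ha' hb' hab' with h' | h' <;> simp [h, h']

/-- Their only crossing is the first one, so pipe `i` is still above pipe `i + d` there. -/
theorem fromWest_of_sameCrossing (hred : P.Reduced) (hd : 0 < d) (hn : i + d < n) {s : ℕ}
    {a b : Edge} (ha : P.traj i s = some a) (hb : P.traj (i + d) (s + d) = some b)
    (hab : P.SameCrossing a b) : a.fromWest = true := by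
  have hcount : Nat.count (P.CrossAt i d) s = 0 := Nat.count_iff_forall_not.mpr fun m hm hm' =>
    (crossAt_unique hred hd hn hm' ((crossAt_iff ha hb).mpr hab)).not_lt hm
  have hlt := (height_lt_iff_even_count hd hn ha hb).mpr (by simp [hcount])
  have hw := fromWest_ne_of_sameCrossing hd hn ha hb hab
  simp only [Edge.height, hab.1, hw] at hlt
  cases h : a.fromWest <;> simp_all

theorem exists_crossAt_iff (hred : P.Reduced) (hd : 0 < d) (hn : i + d < n) {ei ej : ℕ}
    (hi : P.Exits i ei) (hj : P.Exits (i + d) ej) (hne : ei ≠ ej) :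
    (∃ s, P.CrossAt i d s) ↔ ej < ei := by
  have hle : Nat.count (P.CrossAt i d) (i + min ei ej + 1) ≤ 1 := by
    rw [Nat.count_eq_card_filter_range]
    exact Finset.card_le_one.mpr fun s hs s' hs' =>
      crossAt_unique hred hd hn (Finset.mem_filter.mp hs).2 (Finset.mem_filter.mp hs').2
  have hodd : ¬ Even (Nat.count (P.CrossAt i d) (i + min ei ej + 1)) ↔ ej < ei := by
    rw [even_count_crossAt_iff hd hn hi hj hne]; omega
  have hex : (∃ s, P.CrossAt i d s) ↔ Nat.count (P.CrossAt i d) (i + min ei ej + 1) ≠ 0 := by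
    rw [Nat.count_ne_iff_exists]
    exact ⟨fun ⟨m, hm⟩ => ⟨m, Nat.lt_succ_of_le (hm.le hi hj), hm⟩, fun ⟨m, _, hm⟩ => ⟨m, hm⟩⟩
  rw [hex, ← hodd]
  interval_cases Nat.count (P.CrossAt i d) (i + min ei ej + 1) <;> simp

theorem exists_traj_of_cross (hn : i + d < n) {r c : ℕ} {w : Bool}
    (hx : P.cross r c = true) (hi : P.label ⟨r, c, w⟩ = i) (hj : P.label ⟨r, c, !w⟩ = i + d) :
    ∃ s, P.traj i s = some ⟨r, c, w⟩ ∧ P.traj (i + d) (s + d) = some ⟨r, c, !w⟩ := by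
  obtain ⟨s, hs⟩ := (exists_traj_iff (by omega)).mpr ⟨Edge.inShape_of_cross w hx, hi⟩
  obtain ⟨s', hs'⟩ := (exists_traj_iff hn).mpr ⟨Edge.inShape_of_cross (!w) hx, hj⟩
  have := col_add_eq_of_traj hs
  have := col_add_eq_of_traj hs'
  exact ⟨s, hs, by rwa [show s + d = s' by simp only at *; omega]⟩

theorem not_exists_cross_west_add_south (hred : P.Reduced) (hd : 0 < d) (hn : i + d < n) :
    ¬ ∃ r c, P.cross r c = true ∧ P.west r c = i + d ∧ P.south r c = i := by
  rintro ⟨r, c, hx, hw, hs⟩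
  obtain ⟨s, ha, hb⟩ := exists_traj_of_cross (w := false) hn hx hs hw
  simpa using fromWest_of_sameCrossing hred hd hn ha hb ⟨rfl, rfl, hx⟩

theorem exists_cross_west_south_add_iff (hred : P.Reduced) (hd : 0 < d) (hn : i + d < n)
    {ei ej : ℕ} (hi : P.Exits i ei) (hj : P.Exits (i + d) ej) (hne : ei ≠ ej) :
    (∃ r c, P.cross r c = true ∧ P.west r c = i ∧ P.south r c = i + d) ↔ ej < ei := by
  rw [← exists_crossAt_iff hred hd hn hi hj hne]
  constructor
  · rintro ⟨r, c, hx, hw, hs⟩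
    obtain ⟨s, ha, hb⟩ := exists_traj_of_cross (w := true) hn hx hw hs
    exact ⟨s, _, _, ha, hb, rfl, rfl, hx⟩
  · rintro ⟨s, a, b, ha, hb, hab⟩
    have hwa := fromWest_of_sameCrossing hred hd hn ha hb hab
    have hwb := fromWest_ne_of_sameCrossing hd hn ha hb hab
    have hla := (inShape_and_label_of_traj (by omega) ha).2
    have hlb := (inShape_and_label_of_traj hn hb).2
    obtain ⟨hr, hc, hx⟩ := hab
    refine ⟨a.row, a.col, hx, ?_, ?_⟩
    · simpa [label, hwa] using hla
    · simpa [label, hwa, hwb, hr, hc] using hlb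

end PairsOfPipes

section Permutations

variable {P : PipeDream n} {ω : Equiv.Perm (Fin n)}

theorem west_ne_south_of_cross {r c : ℕ} (hx : P.cross r c = true) :
    P.west r c ≠ P.south r c := by
  intro h
  obtain ⟨hlt, s, hs⟩ := label_lt_and_exists_traj (P := P) (Edge.inShape_of_cross true hx)
  obtain ⟨s', hs'⟩ := (exists_traj_iff (P := P) (a := ⟨r, c, false⟩) hlt).mpr
    ⟨Edge.inShape_of_cross false hx, by simp [label, h]⟩
  have := col_add_eq_of_traj hs
  have := col_add_eq_of_traj hs'
  obtain rfl : s = s' := by simp only at *; omega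
  simp [hs] at hs'

theorem cross_west_south_iff (hred : P.Reduced) (hexit : P.HasExitPerm ω) (i j : Fin n) :
    (∃ r c, P.cross r c = true ∧ P.west r c = i ∧ P.south r c = j) ↔
      i < j ∧ ω⁻¹ j < ω⁻¹ i := by
  rcases lt_trichotomy i j with h | rfl | h
  · obtain ⟨d, hd⟩ : ∃ d, j.val = i + d := ⟨j - i, by omega⟩
    have hne : (ω⁻¹ i).val ≠ (ω⁻¹ j).val := fun h' => h.ne (ω⁻¹.injective (Fin.ext h'))
    have key := exists_cross_west_south_add_iff hred (by omega) (by omega)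
      (exits_of_hasExitPerm hexit i) (hd ▸ exits_of_hasExitPerm hexit j) hne
    simp only [h, true_and, Fin.lt_def, ← key, hd]
  · simp only [lt_irrefl, false_and, iff_false]
    rintro ⟨r, c, hx, hw, hs⟩
    exact west_ne_south_of_cross hx (hw.trans hs.symm)
  · obtain ⟨d, hd⟩ : ∃ d, i.val = j + d := ⟨i - j, by omega⟩
    simp only [h.not_gt, false_and, iff_false, hd]
    exact not_exists_cross_west_add_south hred (by omega) (by omega)

theorem ncard_cross_south_eq_card_inversions (hred : P.Reduced) (hexit : P.HasExitPerm ω) (j : Fin n) :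
    {b : ℕ × ℕ | P.cross b.1 b.2 = true ∧ P.south b.1 b.2 = j}.ncard =
      (Finset.univ.filter fun i : Fin n => i < j ∧ ω⁻¹ j < ω⁻¹ i).card := by
  have hlt : ∀ b : ℕ × ℕ, P.cross b.1 b.2 = true → P.west b.1 b.2 < n := fun b hx =>
    (label_lt_and_exists_traj (Edge.inShape_of_cross true hx)).1
  rw [← Set.ncard_coe_finset]
  refine Set.ncard_congr (fun b hb => ⟨P.west b.1 b.2, hlt b hb.1⟩) ?_ ?_ ?_
  · rintro b ⟨hx, hs⟩
    simpa using (cross_west_south_iff hred hexit _ j).mp ⟨b.1, b.2, hx, rfl, hs⟩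
  · rintro b b' ⟨hx, hs⟩ ⟨hx', hs'⟩ h
    by_contra hbb
    exact hred _ _ _ _ hx hx' hbb (Or.inl ⟨Fin.mk.inj h, hs.trans hs'.symm⟩)
  · intro i hi
    obtain ⟨r, c, hx, hw, hs⟩ := (cross_west_south_iff hred hexit i j).mpr (by simpa using hi)
    exact ⟨(r, c), ⟨hx, hs⟩, Fin.ext hw⟩

end Permutations

end PipeDream

theorem card_inversions_add_ninv {n : ℕ} (ω : Equiv.Perm (Fin n)) (j : Fin n) :
    (Finset.univ.filter fun i : Fin n => i < j ∧ ω⁻¹ j < ω⁻¹ i).card + ninv ω j = j := by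
  rw [ninv, ← Finset.card_union_of_disjoint, ← Fin.card_Iio j]
  · congr 1
    ext i
    simp only [Finset.mem_union, Finset.mem_filter, Finset.mem_univ, true_and, Finset.mem_Iio]
    refine ⟨fun h => h.elim And.left And.left, fun h => ?_⟩
    rcases lt_or_gt_of_ne (ω⁻¹.injective.ne h.ne) with h' | h'
    · exact Or.inr ⟨h, h'⟩
    · exact Or.inl ⟨h, h'⟩
  · exact Finset.disjoint_filter.mpr fun i _ h h' => h.2.not_gt h'.2

/-- For any reduced pipe dream `P ∈ Π(ω)` and any pipe `j`, pipe `j`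
of `P` has exactly `ninv ω j` southeast elbows, exactly `1 + ninv ω j` northwest
elbows, exactly `j - 1 - ninv ω j` crossings at which it is the vertical pipe, and
exactly `ω⁻¹ j - 1 - ninv ω j` crossings at which it is the horizontal pipe.
(Everything here is `0`-indexed: pipe `j` enters at the `0`-indexed row `j.val` and
exits at the `0`-indexed column `(ω⁻¹ j).val`, so the counts of vertical and
horizontal crossings are `j.val - ninv ω j` and `(ω⁻¹ j).val - ninv ω j`.
A northwest elbow of a pipe is a box where it enters travelling east and leaves
travelling north, i.e. an elbow box, possibly an antidiagonal half-box, where it is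
the west pipe; a southeast elbow is a box where it enters travelling north and
leaves travelling east, i.e. a full elbow box where it is the south pipe.) -/
theorem pipe_tile_counts (n : ℕ) (ω : Equiv.Perm (Fin n)) (P : PipeDream n)
    (hred : P.Reduced) (hexit : P.HasExitPerm ω) (j : Fin n) :
    {b : ℕ × ℕ | b.1 + b.2 + 2 ≤ n ∧ P.cross b.1 b.2 = false ∧
        P.south b.1 b.2 = j.val}.ncard = ninv ω j ∧
    {b : ℕ × ℕ | b.1 + b.2 + 1 ≤ n ∧ P.cross b.1 b.2 = false ∧
        P.west b.1 b.2 = j.val}.ncard = 1 + ninv ω j ∧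
    {b : ℕ × ℕ | P.cross b.1 b.2 = true ∧ P.south b.1 b.2 = j.val}.ncard
        = j.val - ninv ω j ∧
    {b : ℕ × ℕ | P.cross b.1 b.2 = true ∧ P.west b.1 b.2 = j.val}.ncard
        = (ω⁻¹ j).val - ninv ω j := by
  have he := PipeDream.exits_of_hasExitPerm hexit j
  have hSE := PipeDream.ncard_eq_tileCount j.isLt he false false
  have hNW := PipeDream.ncard_eq_tileCount j.isLt he true false
  have hV := PipeDream.ncard_eq_tileCount j.isLt he false true
  have hH := PipeDream.ncard_eq_tileCount j.isLt he true true
  simp only [PipeDream.Edge.InShape, PipeDream.label, ↓reduceIte, Bool.false_eq_true]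
    at hSE hNW hV hH
  rw [PipeDream.setOf_le_and_cross_eq_true (by norm_num)] at hV hH
  have hcounts := PipeDream.tileCount_of_exits he
  have hinv := PipeDream.ncard_cross_south_eq_card_inversions hred hexit j
  have hninv := card_inversions_add_ninv ω j
  omega
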